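/- The NLS energy of the truncated rescaled soliton on the unit interval becomes asymptotically nonpositive: limsup_{λ → +∞} λ²·( (1/2)·∫₀^λ φ'(y)² dy − (1/6)·∫₀^λ (φ(y) − φ(λ))⁶ dy ) ≤ 0. -/

import Mathlib

/-!
The soliton satisfies the first integral `φ'² = (φ² - φ⁶)/3`, and for `0 ≤ c ≤ φ ≤ 1` one has
`φ⁶ - (φ - c)⁶ ≤ 6c`; with `c = φ(λ)` the energy density is therefore at most
`(φ² - 2φ⁶)/6 + φ(λ)` on `(0, λ)`. Since `(φ φ')' = (2/3)(φ² - 2φ⁶)` and `φ φ'` vanishes at `0`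
and is nonpositive on `[0, ∞)`, the energy is at most `λ φ(λ)`, and `λ³ φ(λ) → 0` by the
exponential decay of `φ`.
-/

open Real MeasureTheory Set Filter

/-- The soliton `φ(x) = cosh(2x/√3)^(-1/2)`. -/
noncomputable def soliton (x : ℝ) : ℝ := (Real.cosh (2 * x / Real.sqrt 3)) ^ (-(1/2) : ℝ)

open Topology

-- Nonpositivity rather than `≤ c`: a real `limsup` that is not cobounded is `0` by convention.
theorem Real.limsup_nonpos_of_eventually_le_of_tendsto_zero {ι : Type*} {f : Filter ι}
    {u v : ι → ℝ} (huv : u ≤ᶠ[f] v) (hv : Tendsto v f (𝓝 0)) : limsup u f ≤ 0 := by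
  by_cases hcob : f.IsCoboundedUnder (· ≤ ·) u
  · refine le_of_forall_pos_le_add fun ε hε => ?_
    refine limsup_le_of_le hcob ?_
    filter_upwards [huv, hv.eventually (gt_mem_nhds (zero_add ε ▸ hε))] with x hx hvx
    linarith
  · exact (Real.limsup_of_not_isCoboundedUnder hcob).le

lemma soliton_nonneg (x : ℝ) : 0 ≤ soliton x :=
  rpow_nonneg (cosh_pos _).le _

lemma soliton_le_one (x : ℝ) : soliton x ≤ 1 :=
  rpow_le_one_of_one_le_of_nonpos (one_le_cosh _) (by norm_num)

lemma soliton_sq (x : ℝ) : soliton x ^ 2 = (cosh (2 * x / √3))⁻¹ := by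
  rw [soliton, ← rpow_natCast, ← rpow_mul (cosh_pos _).le]
  norm_num [rpow_neg_one]

lemma antitoneOn_soliton : AntitoneOn soliton (Ici 0) := by
  intro x (hx : 0 ≤ x) y _ hxy
  refine rpow_le_rpow_of_nonpos (cosh_pos _) ?_ (by norm_num)
  rw [cosh_le_cosh, abs_of_nonneg (by positivity),
    abs_of_nonneg (div_nonneg (by linarith) (sqrt_nonneg 3))]
  gcongr

@[fun_prop]
lemma continuous_soliton : Continuous soliton :=
  (continuous_cosh.comp (by fun_prop)).rpow_const fun _ => Or.inl (cosh_pos _).ne'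

lemma hasDerivAt_two_mul_div_sqrt_three (x : ℝ) :
    HasDerivAt (fun x : ℝ => 2 * x / √3) (2 / √3) x := by
  simpa using ((hasDerivAt_id x).const_mul 2).div_const √3

lemma hasDerivAt_soliton (x : ℝ) :
    HasDerivAt soliton
      (-(1 / √3) * sinh (2 * x / √3) * cosh (2 * x / √3) ^ (-(3/2) : ℝ)) x := by
  convert ((hasDerivAt_cosh _).comp x (hasDerivAt_two_mul_div_sqrt_three x)).rpow_const
    (p := -(1/2)) (Or.inl (cosh_pos _).ne') using 1
  · rfl
  rw [show (-(1/2) : ℝ) - 1 = -(3/2) by norm_num, Function.comp_apply]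
  ring

@[fun_prop]
lemma continuous_deriv_soliton : Continuous (deriv soliton) := by
  rw [funext fun x => (hasDerivAt_soliton x).deriv]
  exact (continuous_const.mul (continuous_sinh.comp (by fun_prop))).mul
    ((continuous_cosh.comp (by fun_prop)).rpow_const fun _ => Or.inl (cosh_pos _).ne')

lemma deriv_soliton_sq (x : ℝ) :
    deriv soliton x ^ 2 = (soliton x ^ 2 - soliton x ^ 6) / 3 := by
  rw [(hasDerivAt_soliton x).deriv, show soliton x ^ 6 = (soliton x ^ 2) ^ 3 by ring, soliton_sq]
  set c := cosh (2 * x / √3)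
  have hc : 0 < c := cosh_pos _
  have hpow : (c ^ (-(3/2) : ℝ)) ^ 2 = (c ^ 3)⁻¹ := by
    rw [← rpow_natCast, ← rpow_mul hc.le, show (-(3/2) : ℝ) * (2 : ℕ) = -(3 : ℕ) by norm_num,
      rpow_neg hc.le, rpow_natCast]
  have hsinh : sinh (2 * x / √3) ^ 2 = c ^ 2 - 1 := by linarith [cosh_sq (2 * x / √3)]
  rw [mul_pow, mul_pow, hpow, hsinh, neg_sq, div_pow, one_pow, sq_sqrt (by norm_num)]
  field_simp

/-- `(3/2) φ φ'`, a primitive of `φ² - 2φ⁶` because `(φ φ')' = φ'² + φ φ''` and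
`φ'' = (φ - 3φ⁵)/3`. -/
noncomputable def solitonPrimitive (x : ℝ) : ℝ :=
  -(√3 / 2) * (sinh (2 * x / √3) / cosh (2 * x / √3) ^ 2)

lemma hasDerivAt_solitonPrimitive (x : ℝ) :
    HasDerivAt solitonPrimitive (soliton x ^ 2 - 2 * soliton x ^ 6) x := by
  have hlin := hasDerivAt_two_mul_div_sqrt_three x
  have hquot := ((hasDerivAt_sinh _).comp x hlin).fun_div
    (((hasDerivAt_cosh _).comp x hlin).fun_pow 2) (pow_pos (cosh_pos _) 2).ne'
  refine (hquot.const_mul (-(√3 / 2))).congr_deriv ?_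
  rw [show soliton x ^ 6 = (soliton x ^ 2) ^ 3 by ring, soliton_sq]
  simp only [Function.comp_apply]
  have hsinh : sinh (2 * x / √3) ^ 2 = cosh (2 * x / √3) ^ 2 - 1 := by
    linarith [cosh_sq (2 * x / √3)]
  have hc := (cosh_pos (2 * x / √3)).ne'
  have h3 : (√3 : ℝ) ≠ 0 := by positivity
  field_simp
  linear_combination 2 * cosh (2 * x / √3) * hsinh

lemma solitonPrimitive_zero : solitonPrimitive 0 = 0 := by simp [solitonPrimitive]

lemma solitonPrimitive_nonpos {x : ℝ} (hx : 0 ≤ x) : solitonPrimitive x ≤ 0 := by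
  exact mul_nonpos_of_nonpos_of_nonneg (neg_nonpos.2 (by positivity)) (by positivity)

lemma integral_soliton_sq_sub_two_mul_pow_six_nonpos {l : ℝ} (hl : 0 ≤ l) :
    ∫ y in (0 : ℝ)..l, (soliton y ^ 2 - 2 * soliton y ^ 6) ≤ 0 := by
  rw [intervalIntegral.integral_eq_sub_of_hasDerivAt (fun x _ => hasDerivAt_solitonPrimitive x)
    (by apply Continuous.intervalIntegrable; fun_prop), solitonPrimitive_zero, sub_zero]
  exact solitonPrimitive_nonpos hl

lemma energy_density_le {y l : ℝ} (hy : 0 ≤ y) (hyl : y ≤ l) :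
    (1/2) * deriv soliton y ^ 2 - (1/6) * (soliton y - soliton l) ^ 6
      ≤ (soliton y ^ 2 - 2 * soliton y ^ 6) / 6 + soliton l := by
  have hl : soliton l ≤ soliton y := antitoneOn_soliton hy (hy.trans hyl) hyl
  have hdiff : 0 ≤ soliton y - soliton l := sub_nonneg.2 hl
  have hmax : max |soliton y| |soliton y - soliton l| ≤ 1 := by
    rw [abs_of_nonneg (soliton_nonneg y), abs_of_nonneg hdiff]
    exact max_le (soliton_le_one y) (by linarith [soliton_nonneg l, soliton_le_one y])
  have htrunc : soliton y ^ 6 - (soliton y - soliton l) ^ 6 ≤ 6 * soliton l := by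
    calc soliton y ^ 6 - (soliton y - soliton l) ^ 6
        ≤ |soliton y - (soliton y - soliton l)| * 6
            * max |soliton y| |soliton y - soliton l| ^ 5 :=
          (le_abs_self _).trans (abs_pow_sub_pow_le _ _ 6)
      _ ≤ soliton l * 6 * 1 := by
          rw [sub_sub_cancel, abs_of_nonneg (soliton_nonneg l)]
          exact mul_le_mul_of_nonneg_left (pow_le_one₀ (by positivity) hmax)
            (mul_nonneg (soliton_nonneg l) (by norm_num))
      _ = 6 * soliton l := by ring
  rw [deriv_soliton_sq]
  linarith

lemma truncated_energy_le {l : ℝ} (hl : 0 ≤ l) :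
    (1/2) * (∫ y in Ioo (0:ℝ) l, deriv soliton y ^ 2)
      - (1/6) * (∫ y in Ioo (0:ℝ) l, (soliton y - soliton l) ^ 6) ≤ l * soliton l := by
  have hIoo (g : ℝ → ℝ) : ∫ y in Ioo (0:ℝ) l, g y = ∫ y in (0:ℝ)..l, g y := by
    rw [intervalIntegral.integral_of_le hl, integral_Ioc_eq_integral_Ioo]
  have hint {g : ℝ → ℝ} (hg : Continuous g) : IntervalIntegrable g volume 0 l :=
    hg.intervalIntegrable 0 l
  rw [hIoo, hIoo, ← intervalIntegral.integral_const_mul, ← intervalIntegral.integral_const_mul,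
    ← intervalIntegral.integral_sub (hint (by fun_prop)) (hint (by fun_prop))]
  calc ∫ y in (0:ℝ)..l, ((1/2) * deriv soliton y ^ 2 - (1/6) * (soliton y - soliton l) ^ 6)
      ≤ ∫ y in (0:ℝ)..l, ((soliton y ^ 2 - 2 * soliton y ^ 6) / 6 + soliton l) :=
        intervalIntegral.integral_mono_on hl (hint (by fun_prop)) (hint (by fun_prop))
          fun y hy => energy_density_le hy.1 hy.2
    _ = (∫ y in (0:ℝ)..l, (soliton y ^ 2 - 2 * soliton y ^ 6)) / 6 + l * soliton l := by
        rw [intervalIntegral.integral_add (hint (by fun_prop)) (hint (by fun_prop)),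
          intervalIntegral.integral_div, intervalIntegral.integral_const, sub_zero, smul_eq_mul]
    _ ≤ l * soliton l := by
        linarith [integral_soliton_sq_sub_two_mul_pow_six_nonpos hl]

lemma soliton_le_sqrt_two_mul_exp (x : ℝ) : soliton x ≤ √2 * exp (-(1 / √3) * x) := by
  have hcosh : exp (2 * x / √3) / 2 ≤ cosh (2 * x / √3) := by
    rw [cosh_eq]; linarith [exp_pos (-(2 * x / √3))]
  calc soliton x ≤ (exp (2 * x / √3) / 2) ^ (-(1/2) : ℝ) :=
        rpow_le_rpow_of_nonpos (by positivity) hcosh (by norm_num)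
    _ = √2 * exp (-(1 / √3) * x) := by
        rw [div_rpow (exp_pos _).le (by norm_num), ← exp_mul, rpow_neg (by norm_num),
          ← sqrt_eq_rpow, div_inv_eq_mul, mul_comm]
        ring_nf

lemma tendsto_pow_mul_soliton_atTop (n : ℕ) :
    Tendsto (fun l => l ^ n * soliton l) atTop (𝓝 0) := by
  have hexp :=
    (tendsto_rpow_mul_exp_neg_mul_atTop_nhds_zero n (1 / √3) (by positivity)).const_mul √2
  simp only [rpow_natCast, mul_zero] at hexp
  refine tendsto_of_tendsto_of_tendsto_of_le_of_le' tendsto_const_nhds hexp ?_ ?_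
  · filter_upwards [eventually_ge_atTop 0] with l hl
    exact mul_nonneg (pow_nonneg hl n) (soliton_nonneg l)
  · filter_upwards [eventually_ge_atTop 0] with l hl
    calc l ^ n * soliton l ≤ l ^ n * (√2 * exp (-(1 / √3) * l)) :=
          mul_le_mul_of_nonneg_left (soliton_le_sqrt_two_mul_exp l) (pow_nonneg hl n)
      _ = √2 * (l ^ n * exp (-(1 / √3) * l)) := by ring

theorem stmt_15 :
    Filter.limsup
      (fun l : ℝ => l ^ 2 *
        ((1/2) * (∫ y in Set.Ioo (0:ℝ) l, (deriv soliton y) ^ 2)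
          - (1/6) * ∫ y in Set.Ioo (0:ℝ) l, (soliton y - soliton l) ^ 6))
      Filter.atTop ≤ 0 := by
  refine Real.limsup_nonpos_of_eventually_le_of_tendsto_zero ?_ (tendsto_pow_mul_soliton_atTop 3)
  filter_upwards [eventually_ge_atTop 0] with l hl
  calc _ ≤ l ^ 2 * (l * soliton l) :=
        mul_le_mul_of_nonneg_left (truncated_energy_le hl) (sq_nonneg l)
    _ = l ^ 3 * soliton l := by ring
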